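/- arXiv:1510.08434 — 4 statements merged into one kernel-verified Lean document; each statement's English description precedes it below -/
import Mathlib

section
/- Let π_{A,b} be an affine automorphism and let x ∈ ℤ/dℤ be a letter. Then the state of π_{A,b} at the first-level vertex x is the affine automorphism π_{A,b}|_x = π_{σ(A), x·σ(a_1) + σ(b)}, where a_1 = [a_{11}, a_{12}, a_{13}, …] is the first row of A. -/
/-- `A` is an infinite upper triangular matrix over `ℤ/dℤ` with units on the diagonal,
i.e. `A ∈ U_∞ℤ_d`. -/
def IsUT (d : ℕ) (A : ℕ → ℕ → ZMod d) : Prop :=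
  (∀ i j, j < i → A i j = 0) ∧ (∀ i, IsUnit (A i i))

/-- The affine transformation `π_{A,b} : ℤ_d^∞ → ℤ_d^∞`, `x ↦ b + x·A`. -/
def affMap (d : ℕ) (A : ℕ → ℕ → ZMod d) (b : ℕ → ZMod d)
    (x : ℕ → ZMod d) : ℕ → ZMod d :=
  fun j => b j + ∑ i ∈ Finset.range (j + 1), x i * A i j

/-- The sequence in `ℤ_d^∞` whose first entry is `u` and whose tail is `w`. -/
def consSeq (d : ℕ) (u : ZMod d) (w : ℕ → ZMod d) : ℕ → ZMod d :=
  fun n => match n with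
  | 0 => u
  | k + 1 => w k

/-- The state `g|_u` of an automorphism `g` (viewed as a transformation of the boundary
`ℤ_d^∞`) at the first-level vertex `u`: `g|_u(w)` is the tail of `g(uw)`. -/
def stateMap (d : ℕ) (g : (ℕ → ZMod d) → ℕ → ZMod d) (u : ZMod d) :
    (ℕ → ZMod d) → ℕ → ZMod d :=
  fun w n => g (consSeq d u w) (n + 1)

/-- The state of the affine automorphism `π_{A,b}` at the first-level vertex `x` is
`π_{A,b}|_x = π_{σ(A), x·σ(a_1) + σ(b)}`, where `σ` denotes the shift (deleting the first
row/column, resp. the first entry) and `a_1` is the first row of `A`. -/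
theorem stmt_5 (d : ℕ) (hd : 2 ≤ d) (A : ℕ → ℕ → ZMod d) (hA : IsUT d A)
    (b : ℕ → ZMod d) (x : ZMod d) :
    stateMap d (affMap d A b) x =
      affMap d (fun i j => A (i + 1) (j + 1))
        (fun j => x * A 0 (j + 1) + b (j + 1)) := by
  funext w n
  simp only [stateMap, affMap, consSeq]
  rw [Finset.sum_range_succ']
  simp [consSeq]
  ring
end

section
/- The affine automorphism π_{A,b} is finite state (the set of its states at all vertices of the tree is finite) if and only if the matrix A, every row of A, and the vector b are all eventually periodic under the shift. -/
/-- The state `g|_v` at a vertex `v` of the tree (a finite word over `ℤ/dℤ`). -/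
def stateWord (d : ℕ) (g : (ℕ → ZMod d) → ℕ → ZMod d) :
    List (ZMod d) → (ℕ → ZMod d) → ℕ → ZMod d
  | [] => g
  | u :: v => stateWord d (stateMap d g u) v

/-- `g` is finite state: the set of its states at all vertices of the tree is finite. -/
def FiniteState (d : ℕ) (g : (ℕ → ZMod d) → ℕ → ZMod d) : Prop :=
  {h | ∃ v : List (ZMod d), h = stateWord d g v}.Finite

/-- A vector is eventually periodic if its orbit under iterated shifts is finite. -/
def EvPeriodicVec (d : ℕ) (b : ℕ → ZMod d) : Prop :=
  {c : ℕ → ZMod d | ∃ n : ℕ, c = fun i => b (i + n)}.Finite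

/-- A matrix is eventually periodic if its orbit under iterated (diagonal) shifts is
finite. -/
def EvPeriodicMat (d : ℕ) (A : ℕ → ℕ → ZMod d) : Prop :=
  {B : ℕ → ℕ → ZMod d | ∃ n : ℕ, B = fun i j => A (i + n) (j + n)}.Finite

section Aux

variable {d : ℕ}

/-- Shift of a matrix by `n`. -/
def shiftMat {d : ℕ} (n : ℕ) (A : ℕ → ℕ → ZMod d) : ℕ → ℕ → ZMod d :=
  fun i j => A (i + n) (j + n)

lemma stateMap_affMap (A : ℕ → ℕ → ZMod d) (b : ℕ → ZMod d) (u : ZMod d) :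
    stateMap d (affMap d A b) u
      = affMap d (shiftMat 1 A) (fun n => b (n + 1) + u * A 0 (n + 1)) := by
  funext w n
  show affMap d A b (consSeq d u w) (n+1) = _
  simp only [affMap, shiftMat]
  rw [Finset.sum_range_succ' (fun i => consSeq d u w i * A i (n+1)) (n+1)]
  show b (n+1) + ((∑ k ∈ Finset.range (n+1), w k * A (k+1) (n+1)) + u * A 0 (n+1)) = _
  ring

lemma stateWord_affMap (v : List (ZMod d)) (A : ℕ → ℕ → ZMod d) (b : ℕ → ZMod d) :
    stateWord d (affMap d A b) v
      = affMap d (shiftMat v.length A)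
          (fun m => b (m + v.length)
            + ∑ k ∈ Finset.range v.length, v.getD k 0 * A k (m + v.length)) := by
  induction v generalizing A b with
  | nil =>
      show affMap d A b = _
      funext x j
      simp [affMap, shiftMat]
  | cons u v ih =>
      show stateWord d (stateMap d (affMap d A b) u) v = _
      rw [stateMap_affMap, ih]
      refine congrArg₂ (affMap d) rfl ?_
      funext m
      rw [show (u :: v).length = v.length + 1 from rfl, Finset.sum_range_succ']
      simp only [List.getD_cons_succ, List.getD_cons_zero]
      show (b (m + v.length + 1) + u * A 0 (m + v.length + 1))
          + (∑ k ∈ Finset.range v.length, v.getD k 0 * A (k + 1) (m + v.length + 1)) = _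
      exact (add_assoc _ _ _).trans (congrArg _ (add_comm _ _))

/-- The indicator sequence of position `i`. -/
def eSeq (d : ℕ) (i : ℕ) : ℕ → ZMod d := fun k => if k = i then 1 else 0

/-- Recover the translation part of an affine map. -/
def recoverV (d : ℕ) (g : (ℕ → ZMod d) → ℕ → ZMod d) : ℕ → ZMod d :=
  g (fun _ => 0)

/-- Recover the matrix part of an affine map. -/
def recoverM (d : ℕ) (g : (ℕ → ZMod d) → ℕ → ZMod d) : ℕ → ℕ → ZMod d :=
  fun i j => if i ≤ j then g (eSeq d i) j - g (fun _ => 0) j else 0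

lemma recoverV_affMap (A : ℕ → ℕ → ZMod d) (c : ℕ → ZMod d) :
    recoverV d (affMap d A c) = c := by
  funext j; simp [recoverV, affMap]

lemma eSeq_sum (i n : ℕ) (hi : i < n) (f : ℕ → ZMod d) :
    ∑ k ∈ Finset.range n, eSeq d i k * f k = f i := by
  simp only [eSeq, ite_mul, one_mul, zero_mul]
  rw [Finset.sum_ite_eq' (Finset.range n) i f]
  simp [hi]

lemma recoverM_affMap (A : ℕ → ℕ → ZMod d) (c : ℕ → ZMod d)
    (hlow : ∀ i j, j < i → A i j = 0) :
    recoverM d (affMap d A c) = A := by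
  funext i j
  simp only [recoverM, affMap]
  by_cases h : i ≤ j
  · rw [if_pos h, eSeq_sum i (j+1) (Nat.lt_succ_of_le h)]
    simp
  · rw [if_neg h, hlow i j (by omega)]

lemma getD_ofFn (f : ℕ → ZMod d) (n k : ℕ) (hk : k < n) :
    (List.ofFn (fun j : Fin n => f j)).getD k 0 = f k := by
  rw [List.getD_eq_getElem _ _ (by simpa using hk), List.getElem_ofFn]

lemma stateWord_ofFn (A : ℕ → ℕ → ZMod d) (b : ℕ → ZMod d) (f : ℕ → ZMod d) (n : ℕ) :
    stateWord d (affMap d A b) (List.ofFn (fun j : Fin n => f j))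
      = affMap d (shiftMat n A)
          (fun m => b (m + n) + ∑ k ∈ Finset.range n, f k * A k (m + n)) := by
  rw [stateWord_affMap]
  simp only [List.length_ofFn]
  refine congrArg₂ (affMap d) rfl ?_
  funext m
  congr 1
  refine Finset.sum_congr rfl (fun k hk => ?_)
  rw [getD_ofFn f n k (Finset.mem_range.mp hk)]

end Aux

/-- The affine automorphism `π_{A,b}` is finite state if and only if the matrix `A`,
every row of `A`, and the vector `b` are all eventually periodic under the shift. -/
theorem stmt_6 (d : ℕ) (hd : 2 ≤ d) (A : ℕ → ℕ → ZMod d) (hA : IsUT d A)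
    (b : ℕ → ZMod d) :
    FiniteState d (affMap d A b) ↔
      (EvPeriodicMat d A ∧ (∀ i, EvPeriodicVec d (fun j => A i j)) ∧
        EvPeriodicVec d b) := by
  haveI : NeZero d := ⟨by omega⟩
  classical
  have hlow : ∀ n i j, j < i → shiftMat n A i j = 0 :=
    fun n i j h => hA.1 _ _ (by omega)
  constructor
  · intro hFS
    refine ⟨?_, ?_, ?_⟩
    · -- the matrix is eventually periodic
      show Set.Finite _
      refine Set.Finite.subset (hFS.image (recoverM d)) ?_
      rintro B ⟨n, rfl⟩
      refine ⟨stateWord d (affMap d A b) (List.ofFn (fun j : Fin n => (fun _ : ℕ => (0:ZMod d)) ↑j)),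
        ⟨_, rfl⟩, ?_⟩
      rw [stateWord_ofFn A b (fun _ : ℕ => (0:ZMod d)) n]
      exact recoverM_affMap _ _ (hlow n)
    · -- each row is eventually periodic
      intro i
      show Set.Finite _
      refine Set.Finite.subset
        (Set.Finite.union
          ((Set.finite_Iic i).image (fun n => fun j => A i (j + n)))
          ((hFS.prod hFS).image
            (fun p => fun j => recoverV d p.1 j - recoverV d p.2 j))) ?_
      rintro c ⟨n, rfl⟩
      by_cases hn : n ≤ i
      · exact Or.inl ⟨n, hn, rfl⟩
      · refine Or.inr ⟨(stateWord d (affMap d A b) (List.ofFn (fun j : Fin n => eSeq d i j)),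
          stateWord d (affMap d A b) (List.ofFn (fun j : Fin n => (fun _ : ℕ => (0:ZMod d)) ↑j))),
          ⟨⟨_, rfl⟩, ⟨_, rfl⟩⟩, ?_⟩
        have e1 : recoverV d (stateWord d (affMap d A b)
            (List.ofFn (fun j : Fin n => eSeq d i j)))
            = fun m => b (m + n) + A i (m + n) := by
          rw [stateWord_ofFn, recoverV_affMap]
          funext m
          rw [eSeq_sum i n (by omega)]
        have e2 : recoverV d (stateWord d (affMap d A b)
            (List.ofFn (fun j : Fin n => (fun _ : ℕ => (0:ZMod d)) ↑j)))
            = fun m => b (m + n) := by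
          rw [stateWord_ofFn A b (fun _ : ℕ => (0:ZMod d)) n, recoverV_affMap]
          funext m
          simp
        funext j
        simp only [e1, e2]
        ring
    · -- the vector is eventually periodic
      show Set.Finite _
      refine Set.Finite.subset (hFS.image (recoverV d)) ?_
      rintro c ⟨n, rfl⟩
      refine ⟨stateWord d (affMap d A b) (List.ofFn (fun j : Fin n => (fun _ : ℕ => (0:ZMod d)) ↑j)),
        ⟨_, rfl⟩, ?_⟩
      rw [stateWord_ofFn A b (fun _ : ℕ => (0:ZMod d)) n, recoverV_affMap]
      funext m
      simp
  · rintro ⟨h1, h2, h3⟩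
    have h1' : {B : ℕ → ℕ → ZMod d | ∃ n : ℕ, B = fun i j => A (i + n) (j + n)}.Finite := h1
    -- the set of shifted rows appearing in the translation parts of states
    have hRSfin : {r : ℕ → ZMod d | ∃ k n : ℕ, k < n ∧ r = fun m => A k (m + n)}.Finite := by
      have hsub : {r : ℕ → ZMod d | ∃ k n : ℕ, k < n ∧ r = fun m => A k (m + n)} ⊆
          ⋃ B ∈ {B : ℕ → ℕ → ZMod d | ∃ n : ℕ, B = fun i j => A (i + n) (j + n)},
            {r : ℕ → ZMod d | ∃ t : ℕ, r = fun j => B 0 (j + t)} := by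
        rintro r ⟨k, n, hkn, rfl⟩
        refine Set.mem_biUnion (show ∃ m : ℕ, (fun i j => A (i + k) (j + k))
            = fun i j => A (i + m) (j + m) from ⟨k, rfl⟩) ⟨n - k, ?_⟩
        funext m
        show A k (m + n) = A (0 + k) (m + (n - k) + k)
        simp only [Nat.zero_add]
        congr 1
        omega
      refine Set.Finite.subset (Set.Finite.biUnion h1' ?_) hsub
      rintro B ⟨n0, rfl⟩
      refine Set.Finite.subset (h2 n0) ?_
      rintro r ⟨t, rfl⟩
      refine ⟨t + n0, ?_⟩
      funext j
      show A (0 + n0) (j + t + n0) = A n0 (j + (t + n0))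
      simp only [Nat.zero_add]
      congr 1
      omega
    set T : Finset (ℕ → ZMod d) := hRSfin.toFinset with hT
    refine Set.Finite.subset
      ((Set.Finite.image (fun p : (ℕ → ℕ → ZMod d) × (ℕ → ZMod d) => affMap d p.1 p.2)
        (Set.Finite.prod h1'
          ((Set.Finite.image
              (fun p : (ℕ → ZMod d) × ({r // r ∈ T} → ZMod d) =>
                fun m => p.1 m + ∑ t : {r // r ∈ T}, p.2 t * (t : ℕ → ZMod d) m)
              (Set.Finite.prod h3 Set.finite_univ))))))
      ?_
    rintro h ⟨v, rfl⟩
    rw [stateWord_affMap]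
    refine ⟨(shiftMat v.length A, _), ⟨⟨v.length, rfl⟩, ?_⟩, rfl⟩
    refine ⟨(fun m => b (m + v.length),
      fun t => ∑ k ∈ (Finset.range v.length).filter
          (fun k => (fun m => A k (m + v.length)) = (t : ℕ → ZMod d)), v.getD k 0),
      ⟨⟨v.length, rfl⟩, trivial⟩, ?_⟩
    funext m
    simp only
    congr 1
    rw [Finset.sum_coe_sort T
      (fun r => (∑ k ∈ (Finset.range v.length).filter
          (fun k => (fun m => A k (m + v.length)) = r), v.getD k 0) * r m)]
    rw [← Finset.sum_fiberwise_of_maps_to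
      (g := fun k => (fun m' => A k (m' + v.length))) (t := T)
      (fun k hk => by
        rw [hT, Set.Finite.mem_toFinset]
        exact ⟨k, v.length, Finset.mem_range.mp hk, rfl⟩)
      (fun k => v.getD k 0 * A k (m + v.length))]
    refine Finset.sum_congr rfl (fun r hr => ?_)
    rw [Finset.sum_mul]
    refine Finset.sum_congr rfl (fun k hk => ?_)
    have hfib := (Finset.mem_filter.mp hk).2
    rw [← congrFun hfib m]
end

section
/- Let f(t), b(t) ∈ ℤ_d[[t]] be power series with f(0) a unit. The automorphism τ_{f,b} is finite state (the set of its states at all vertices of the tree is finite) if and only if both f(t) and b(t) are rational power series, i.e. there exist polynomials p, q, r, s ∈ ℤ_d[t] with q(0) and s(0) units such that f·q = p and b·s = r. -/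
/-!
The state of `τ_{f,b}` at a letter `u` is again affine: `τ_{f,b}|_u = τ_{f,c}` with
`c = (b + u f - (b + u f)(0)) / t`. Hence the states of `τ_{f,b}` are the `τ_{f,c}` for `c` in the
orbit of `b` under these steps, and distinct `c` give distinct states.

If `f = P / D` and `b = N / D` with `D(0)` a unit, the steps preserve the set of `c` for which
`c D` is a polynomial of degree at most `max (deg P, deg N, deg D)`, a finite set. Conversely, the
states along the words `0ⁿ` and `10ⁿ` correspond to the shifts of `b` and of `b + f`; if there are
finitely many, both coefficient sequences are eventually periodic, so `b` and `b + f` are rational.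
-/

/-- The affine transformation `τ_{f,b}` of `ℤ_d[[t]]`, `g ↦ b + g·f`, viewed as a
transformation of `ℤ_d^∞` via coefficient sequences. -/
noncomputable def tauMap (d : ℕ) (f b : PowerSeries (ZMod d)) (g : ℕ → ZMod d) :
    ℕ → ZMod d :=
  fun n => PowerSeries.coeff (R := ZMod d) n (b + (PowerSeries.mk g) * f)

/-- A power series is rational: it becomes a polynomial after multiplication by a
polynomial with invertible constant term. -/
def IsRational (d : ℕ) (f : PowerSeries (ZMod d)) : Prop :=
  ∃ p q : Polynomial (ZMod d), IsUnit (q.coeff 0) ∧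
    f * (q : PowerSeries (ZMod d)) = (p : PowerSeries (ZMod d))
open PowerSeries
open scoped Polynomial

namespace PowerSeries

variable {R : Type*}

section Semiring

variable [Semiring R]

noncomputable def shift (φ : R⟦X⟧) : R⟦X⟧ :=
  mk fun n => coeff (n + 1) φ

@[simp]
theorem coeff_shift (φ : R⟦X⟧) (n : ℕ) : coeff n (shift φ) = coeff (n + 1) φ :=
  coeff_mk _ _

theorem shift_iterate (k : ℕ) (φ : R⟦X⟧) : shift^[k] φ = mk fun i => coeff (i + k) φ := by
  induction k generalizing φ with
  | zero => ext; simp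
  | succ k ih => ext; simp [Function.iterate_succ_apply, ih, Nat.add_assoc]

theorem eq_X_pow_mul_shift_iterate_add_trunc (k : ℕ) (φ : R⟦X⟧) :
    φ = X ^ k * shift^[k] φ + (trunc k φ : R⟦X⟧) := by
  rw [shift_iterate]
  exact eq_X_pow_mul_shift_add_trunc k φ

end Semiring

section CommRing

variable [CommRing R]

theorem X_mul_shift (φ : R⟦X⟧) : X * shift φ = φ - C (constantCoeff φ) :=
  eq_sub_of_add_eq (eq_X_mul_shift_add_const φ).symm

theorem shift_mul_eq_divX {g : R⟦X⟧} {D M : R[X]} (h : g * D = M) :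
    shift g * D = ((M - Polynomial.C (constantCoeff g) * D).divX : R⟦X⟧) := by
  set Q := M - Polynomial.C (constantCoeff g) * D
  have hQ0 : Q.coeff 0 = 0 := by
    have := congrArg (coeff 0) h
    simp only [coeff_zero_eq_constantCoeff_apply, map_mul, Polynomial.constantCoeff_coe] at this
    simp [Q, ← this]
  apply X_mul_cancel
  have hQ := Polynomial.X_mul_divX_add Q
  rw [hQ0, map_zero, add_zero] at hQ
  rw [← mul_assoc, X_mul_shift, ← Polynomial.coe_X, ← Polynomial.coe_mul, hQ]
  simp only [Q, Polynomial.coe_sub, Polynomial.coe_mul, Polynomial.coe_C, ← h]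
  ring

def numeratorsLE (D : R⟦X⟧) (K : ℕ) : Set R⟦X⟧ :=
  {c | ∃ N : R[X], N.natDegree ≤ K ∧ c * D = N}

theorem add_C_mul_mem_numeratorsLE {D : R⟦X⟧} {K : ℕ} {c f : R⟦X⟧}
    (hc : c ∈ numeratorsLE D K) (hf : f ∈ numeratorsLE D K) (u : R) :
    c + C u * f ∈ numeratorsLE D K := by
  obtain ⟨N, hN, hcN⟩ := hc
  obtain ⟨P, hP, hfP⟩ := hf
  refine ⟨N + Polynomial.C u * P, Polynomial.natDegree_add_le_of_degree_le hN
    ((Polynomial.natDegree_C_mul_le u P).trans hP), ?_⟩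
  rw [add_mul, hcN, mul_assoc, hfP, Polynomial.coe_add, Polynomial.coe_mul, Polynomial.coe_C]

theorem shift_mem_numeratorsLE {D : R[X]} {K : ℕ} (hD : D.natDegree ≤ K) {c : R⟦X⟧}
    (hc : c ∈ numeratorsLE (D : R⟦X⟧) K) : shift c ∈ numeratorsLE (D : R⟦X⟧) K := by
  obtain ⟨N, hN, hcN⟩ := hc
  refine ⟨_, Polynomial.natDegree_divX_le.trans ?_, shift_mul_eq_divX hcN⟩
  exact (Polynomial.natDegree_sub_le_of_le hN
    ((Polynomial.natDegree_C_mul_le _ _).trans hD)).trans (max_self K).le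

theorem finite_numeratorsLE [Finite R] {D : R⟦X⟧} (hD : IsUnit D) (K : ℕ) :
    (numeratorsLE D K).Finite := by
  refine Set.Finite.of_finite_image (f := fun c (i : Fin (K + 1)) => coeff i (c * D))
    (Set.toFinite _) ?_
  rintro c ⟨N, hN, hcN⟩ c' ⟨N', hN', hcN'⟩ h
  suffices N = N' from hD.mul_left_injective (by simp only [hcN, hcN', this])
  ext i
  by_cases hi : i ≤ K
  · simpa [hcN, hcN'] using congrFun h ⟨i, Nat.lt_succ_of_le hi⟩
  · rw [Polynomial.coeff_eq_zero_of_natDegree_lt (by omega),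
      Polynomial.coeff_eq_zero_of_natDegree_lt (by omega)]

end CommRing

end PowerSeries

section

variable {d : ℕ}

theorem IsRational.sub {a c : (ZMod d)⟦X⟧} (ha : IsRational d a) (hc : IsRational d c) :
    IsRational d (a - c) := by
  obtain ⟨p, q, hq, hpq⟩ := ha
  obtain ⟨r, s, hs, hrs⟩ := hc
  refine ⟨p * s - r * q, q * s, by simpa [Polynomial.mul_coeff_zero] using hq.mul hs, ?_⟩
  push_cast
  linear_combination (s : (ZMod d)⟦X⟧) * hpq - (q : (ZMod d)⟦X⟧) * hrs

theorem IsRational.of_shift_iterate {k : ℕ} {c : (ZMod d)⟦X⟧}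
    (h : IsRational d (shift^[k] c)) : IsRational d c := by
  obtain ⟨p, q, hq, hpq⟩ := h
  refine ⟨trunc k c * q + Polynomial.X ^ k * p, q, hq, ?_⟩
  conv_lhs => rw [eq_X_pow_mul_shift_iterate_add_trunc k c]
  push_cast
  linear_combination X ^ k * hpq

theorem isRational_of_shift_iterate_eq_self {k : ℕ} (hk : k ≠ 0) {c : (ZMod d)⟦X⟧}
    (h : shift^[k] c = c) : IsRational d c := by
  refine ⟨trunc k c, 1 - Polynomial.X ^ k, by simp [hk.symm], ?_⟩
  have hc := eq_X_pow_mul_shift_iterate_add_trunc k c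
  rw [h] at hc
  push_cast
  linear_combination hc

theorem isRational_of_shift_iterate_eq {n m : ℕ} (hnm : n < m) {c : (ZMod d)⟦X⟧}
    (h : shift^[n] c = shift^[m] c) : IsRational d c := by
  refine IsRational.of_shift_iterate (k := n) (isRational_of_shift_iterate_eq_self
    (k := m - n) (by omega) ?_)
  rw [← Function.iterate_add_apply, Nat.sub_add_cancel hnm.le, h]

noncomputable def tauStep (f c : (ZMod d)⟦X⟧) (u : ZMod d) : (ZMod d)⟦X⟧ :=
  shift (c + C u * f)

theorem mk_consSeq (u : ZMod d) (w : ℕ → ZMod d) : mk (consSeq d u w) = C u + X * mk w := by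
  ext (_ | n) <;> simp [consSeq, coeff_succ_X_mul]

theorem stateMap_tauMap (f b : (ZMod d)⟦X⟧) (u : ZMod d) :
    stateMap d (tauMap d f b) u = tauMap d f (tauStep f b u) := by
  funext w n
  have : b + (C u + X * mk w) * f = (b + C u * f) + X * (mk w * f) := by ring
  simp only [stateMap, tauMap, tauStep, mk_consSeq, this, map_add, coeff_succ_X_mul, coeff_shift]

theorem stateWord_tauMap (f b : (ZMod d)⟦X⟧) (v : List (ZMod d)) :
    stateWord d (tauMap d f b) v = tauMap d f (v.foldl (tauStep f) b) := by
  induction v generalizing b with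
  | nil => rfl
  | cons u v ih => rw [stateWord, stateMap_tauMap, ih, List.foldl_cons]

theorem tauMap_injective (f : (ZMod d)⟦X⟧) : Function.Injective (tauMap d f) := by
  intro b c h
  ext n
  simpa [tauMap] using congrFun (congrFun h fun _ => 0) n

theorem finiteState_tauMap_iff (f b : (ZMod d)⟦X⟧) :
    FiniteState d (tauMap d f b) ↔
      (Set.range fun v : List (ZMod d) => v.foldl (tauStep f) b).Finite := by
  have : {h | ∃ v, h = stateWord d (tauMap d f b) v} =
      tauMap d f '' Set.range fun v : List (ZMod d) => v.foldl (tauStep f) b := by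
    ext h
    simp [stateWord_tauMap, eq_comm]
  rw [FiniteState, this, Set.finite_image_iff (tauMap_injective f).injOn]

theorem foldl_tauStep_replicate_zero (f b : (ZMod d)⟦X⟧) (n : ℕ) :
    (List.replicate n 0).foldl (tauStep f) b = shift^[n] b := by
  induction n generalizing b with
  | zero => rfl
  | succ n ih => simp [List.replicate_succ, ih, tauStep, Function.iterate_succ_apply]

theorem foldl_tauStep_mem_numeratorsLE {f : (ZMod d)⟦X⟧} {D : (ZMod d)[X]} {K : ℕ}
    (hD : D.natDegree ≤ K) (hf : f ∈ numeratorsLE (D : (ZMod d)⟦X⟧) K) (v : List (ZMod d))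
    {c : (ZMod d)⟦X⟧} (hc : c ∈ numeratorsLE (D : (ZMod d)⟦X⟧) K) :
    v.foldl (tauStep f) c ∈ numeratorsLE (D : (ZMod d)⟦X⟧) K := by
  induction v generalizing c with
  | nil => exact hc
  | cons u v ih => exact ih (shift_mem_numeratorsLE hD (add_C_mul_mem_numeratorsLE hc hf u))

theorem IsRational.of_finiteState_tauMap {f b : (ZMod d)⟦X⟧}
    (h : FiniteState d (tauMap d f b)) : IsRational d f ∧ IsRational d b := by
  rw [finiteState_tauMap_iff] at h
  have hb : IsRational d b := by
    obtain ⟨n, m, hnm, he⟩ := h.exists_lt_map_eq_of_forall_mem (f := fun n => shift^[n] b)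
      fun n => Set.mem_range.2 ⟨List.replicate n 0, foldl_tauStep_replicate_zero f b n⟩
    exact isRational_of_shift_iterate_eq hnm he
  have hbf : IsRational d (b + f) := by
    obtain ⟨n, m, hnm, he⟩ := h.exists_lt_map_eq_of_forall_mem
      (f := fun n => shift^[n] (shift (b + f)))
      fun n => Set.mem_range.2
        ⟨1 :: List.replicate n 0, by simp [foldl_tauStep_replicate_zero, tauStep]⟩
    exact IsRational.of_shift_iterate (k := 1) (isRational_of_shift_iterate_eq hnm he)
  exact ⟨by simpa using hbf.sub hb, hb⟩

theorem finiteState_tauMap_of_isRational [NeZero d] {f b : (ZMod d)⟦X⟧}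
    (hf : IsRational d f) (hb : IsRational d b) : FiniteState d (tauMap d f b) := by
  obtain ⟨p, q, hq, hfq⟩ := hf
  obtain ⟨r, s, hs, hbs⟩ := hb
  set K := p.natDegree + s.natDegree + r.natDegree + q.natDegree
  have hDK : (q * s).natDegree ≤ K := Polynomial.natDegree_mul_le.trans (by omega)
  have hfK : f ∈ numeratorsLE ((q * s : (ZMod d)[X]) : (ZMod d)⟦X⟧) K :=
    ⟨p * s, Polynomial.natDegree_mul_le.trans (by omega), by
      push_cast; linear_combination (s : (ZMod d)⟦X⟧) * hfq⟩
  have hbK : b ∈ numeratorsLE ((q * s : (ZMod d)[X]) : (ZMod d)⟦X⟧) K :=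
    ⟨r * q, Polynomial.natDegree_mul_le.trans (by omega), by
      push_cast; linear_combination (q : (ZMod d)⟦X⟧) * hbs⟩
  have hD : IsUnit ((q * s : (ZMod d)[X]) : (ZMod d)⟦X⟧) := by
    rw [isUnit_iff_constantCoeff, Polynomial.constantCoeff_coe, Polynomial.mul_coeff_zero]
    exact hq.mul hs
  rw [finiteState_tauMap_iff]
  exact (finite_numeratorsLE hD K).subset
    (Set.range_subset_iff.2 fun v => foldl_tauStep_mem_numeratorsLE hDK hfK v hbK)

end

theorem stmt_7_general (d : ℕ) (hd : 2 ≤ d) (f b : PowerSeries (ZMod d)) :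
    FiniteState d (tauMap d f b) ↔ (IsRational d f ∧ IsRational d b) := by
  have : NeZero d := ⟨by omega⟩
  exact ⟨IsRational.of_finiteState_tauMap,
    fun ⟨hf, hb⟩ => finiteState_tauMap_of_isRational hf hb⟩

/-- For `f, b ∈ ℤ_d[[t]]` with `f(0)` a unit, the automorphism `τ_{f,b}` is finite state
if and only if both `f` and `b` are rational power series. -/
theorem stmt_7 (d : ℕ) (hd : 2 ≤ d) (f b : PowerSeries (ZMod d))
    (hf : IsUnit (PowerSeries.constantCoeff (R := ZMod d) f)) :
    FiniteState d (tauMap d f b) ↔ (IsRational d f ∧ IsRational d b) :=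
  stmt_7_general d hd f b
end

section
/- The normalizer of the group Aff_I(X*) in Aut(X*) coincides with the group Aff(X*) of all affine automorphisms: an automorphism g of the rooted d-regular tree satisfies g⁻¹ Aff_I(X*) g = Aff_I(X*) if and only if g = π_{A,b} for some A ∈ U_∞ℤ_d and b ∈ ℤ_d^∞. -/
/-- `g` preserves agreement of initial segments: if two sequences agree in their first
`n` entries, then so do their images, for every `n`. -/
def Pres (d : ℕ) (g : (ℕ → ZMod d) → ℕ → ZMod d) : Prop :=
  ∀ (n : ℕ) (x y : ℕ → ZMod d), (∀ i < n, x i = y i) → ∀ i < n, g x i = g y i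

/-- `Aff_I(X*)`: the set of translations `x ↦ b + x`, as permutations of the boundary. -/
def AffISet (d : ℕ) : Set (Equiv.Perm (ℕ → ZMod d)) :=
  {e | ∃ b : ℕ → ZMod d, ∀ x, e x = fun i => b i + x i}

namespace AffISet

variable {d : ℕ}

lemma eq_range_addLeft : AffISet d = Set.range Equiv.addLeft := by
  ext f
  refine ⟨fun ⟨b, hb⟩ => ⟨b, Equiv.ext fun x => (hb x).symm⟩, ?_⟩
  rintro ⟨b, rfl⟩
  exact ⟨b, fun _ => rfl⟩

lemma conj_addLeft_eq_addLeft_iff (g : Equiv.Perm (ℕ → ZMod d)) (c e : ℕ → ZMod d) :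
    g⁻¹ * Equiv.addLeft c * g = Equiv.addLeft e ↔ ∀ x, g (e + x) = c + g x := by
  simp only [Equiv.ext_iff, Equiv.Perm.mul_apply, Equiv.coe_addLeft]
  exact forall_congr' fun x => by rw [Equiv.Perm.inv_eq_iff_eq, eq_comm]

theorem conj_image_eq_iff (g : Equiv.Perm (ℕ → ZMod d)) :
    (fun f => g⁻¹ * f * g) '' AffISet d = AffISet d ↔
      ∀ e x, g (e + x) = g e - g 0 + g x := by
  rw [eq_range_addLeft, ← Set.range_comp]
  constructor
  · intro h e x
    have he : Equiv.addLeft e ∈ Set.range ((fun f => g⁻¹ * f * g) ∘ Equiv.addLeft) := by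
      rw [h]; exact ⟨e, rfl⟩
    obtain ⟨c, hc⟩ := he
    rw [Function.comp_apply, conj_addLeft_eq_addLeft_iff] at hc
    have hc0 : g e = c + g 0 := by simpa using hc 0
    rw [hc, hc0, add_sub_cancel_right]
  · intro hadd
    apply Set.Subset.antisymm <;> rw [Set.range_subset_iff]
    · intro c
      refine ⟨g⁻¹ (c + g 0), ((conj_addLeft_eq_addLeft_iff _ _ _).2 fun x => ?_).symm⟩
      rw [hadd, Equiv.Perm.coe_inv, Equiv.apply_symm_apply, add_sub_cancel_right]
    · exact fun e => ⟨g e - g 0, (conj_addLeft_eq_addLeft_iff _ _ _).2 (hadd e)⟩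

end AffISet

lemma exists_zmodLinearMap_of_map_add {n : ℕ} {M N : Type*} [AddCommGroup M]
    [AddCommGroup N] [Module (ZMod n) M] [Module (ZMod n) N] {g : M → N}
    (hg : ∀ e x, g (e + x) = g e - g 0 + g x) :
    ∃ L : M →ₗ[ZMod n] N, ∀ x, g x = g 0 + L x := by
  let φ : M →+ N := AddMonoidHom.mk' (fun x => g x - g 0) fun e x => by
    rw [hg]; abel
  exact ⟨φ.toZModLinearMap n, fun x => by simp [φ]⟩

namespace Pres

variable {d : ℕ}

lemma of_eq_const_add {g L : (ℕ → ZMod d) → ℕ → ZMod d} {c : ℕ → ZMod d} (hg : Pres d g)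
    (hgL : ∀ x, g x = c + L x) : Pres d L := by
  intro n x y hxy i hi
  simpa [hgL] using hg n x y hxy i hi

variable {L : (ℕ → ZMod d) →ₗ[ZMod d] (ℕ → ZMod d)}

lemma linearMap_apply_single_of_lt (hL : Pres d L) {i j : ℕ} (hji : j < i) :
    L (Pi.single i 1) j = 0 := by
  have h := hL i (Pi.single i 1) 0 (fun k hk => Pi.single_eq_of_ne hk.ne 1) j hji
  rwa [map_zero] at h

lemma linearMap_apply_eq_sum (hL : Pres d L) (x : ℕ → ZMod d) (j : ℕ) :
    L x j = ∑ i ∈ Finset.range (j + 1), x i * L (Pi.single i 1) j := by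
  set y : ℕ → ZMod d := ∑ i ∈ Finset.range (j + 1), x i • Pi.single i 1
  have hxy : ∀ k < j + 1, x k = y k := fun k hk => by
    simp [y, Finset.sum_apply, Pi.single_apply, hk]
  rw [hL (j + 1) x y hxy j j.lt_succ_self, map_sum, Finset.sum_apply]
  simp only [map_smul, Pi.smul_apply, smul_eq_mul]

end Pres

section affMap

variable {d : ℕ} (A : ℕ → ℕ → ZMod d) (b : ℕ → ZMod d)

lemma affMap_zero : affMap d A b 0 = b := by
  ext j
  simp [affMap]

lemma affMap_add (e x : ℕ → ZMod d) :
    affMap d A b (e + x) = affMap d A b e - affMap d A b 0 + affMap d A b x := by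
  rw [affMap_zero]
  ext j
  simp only [affMap, Pi.add_apply, Pi.sub_apply, add_mul, Finset.sum_add_distrib]
  ring

lemma affMap_apply_of_forall_lt_eq_zero {x : ℕ → ZMod d} {j : ℕ} (hx : ∀ k < j, x k = 0) :
    affMap d A b x j = b j + x j * A j j := by
  rw [affMap, Finset.sum_range_succ, Finset.sum_eq_zero fun k hk => by
    rw [hx k (Finset.mem_range.1 hk), zero_mul], zero_add]

lemma isUnit_diag_of_pres_symm {g : Equiv.Perm (ℕ → ZMod d)} (hgA : ∀ x, g x = affMap d A b x)
    (hg' : Pres d g.symm) (i : ℕ) : IsUnit (A i i) := by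
  have hg0 : g 0 = b := by rw [hgA, affMap_zero]
  set x := g.symm (b + Pi.single i 1)
  have hx : ∀ k < i, x k = 0 := fun k hk => by
    have h := hg' i (b + Pi.single i 1) (g 0) (fun k hk => by simp [hg0, hk.ne]) k hk
    rwa [Equiv.symm_apply_apply] at h
  have hxi : b i + x i * A i i = b i + 1 := by
    rw [← affMap_apply_of_forall_lt_eq_zero A b hx, ← hgA, Equiv.apply_symm_apply]
    simp
  exact .of_mul_eq_one (x i) (by rw [mul_comm]; exact add_left_cancel hxi)

end affMap

theorem stmt_13_general (d : ℕ) (g : Equiv.Perm (ℕ → ZMod d))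
    (hg : Pres d g) (hg' : Pres d g.symm) :
    (fun f => g⁻¹ * f * g) '' AffISet d = AffISet d ↔
      ∃ A b, IsUT d A ∧ ∀ x, g x = affMap d A b x := by
  rw [AffISet.conj_image_eq_iff]
  constructor
  · intro hadd
    obtain ⟨L, hgL⟩ := exists_zmodLinearMap_of_map_add (n := d) hadd
    have hL : Pres d L := hg.of_eq_const_add hgL
    set A : ℕ → ℕ → ZMod d := fun i j => L (Pi.single i 1) j
    have hgA : ∀ x, g x = affMap d A (g 0) x := fun x => by
      ext j
      rw [hgL, Pi.add_apply, hL.linearMap_apply_eq_sum]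
      rfl
    exact ⟨A, g 0, ⟨fun i j => hL.linearMap_apply_single_of_lt,
      isUnit_diag_of_pres_symm A (g 0) hgA hg'⟩, hgA⟩
  · rintro ⟨A, b, -, hgA⟩ e x
    simp only [hgA, affMap_add]

/-- The normalizer of `Aff_I(X*)` in `Aut(X*)` is the group `Aff(X*)` of all affine
automorphisms: an automorphism `g` of the rooted `d`-regular tree satisfies
`g⁻¹ Aff_I(X*) g = Aff_I(X*)` if and only if `g = π_{A,b}` for some `A ∈ U_∞ℤ_d` and
`b ∈ ℤ_d^∞`. -/
theorem stmt_13 (d : ℕ) (hd : 2 ≤ d) (g : Equiv.Perm (ℕ → ZMod d))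
    (hg : Pres d g) (hg' : Pres d g.symm) :
    (fun f => g⁻¹ * f * g) '' AffISet d = AffISet d ↔
      ∃ A b, IsUT d A ∧ ∀ x, g x = affMap d A b x :=
  stmt_13_general d g hg hg'
end
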